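/- Let X and Y be nontrivial real Banach spaces, let H be a closed linear subspace of L(X,Y) containing all finite rank operators, and let δ > 0. If the dual space X* is δ-average rough and Y is alternatively octahedral, then H (with the induced operator norm) is δ-average rough. -/

import Mathlib

/-!
Given unit operators `Tᵢ`, choose `gᵢ` in the unit ball of `Y*` such that `aᵢ = gᵢ ∘ Tᵢ` has norm
almost one. Average roughness of `X*` at the normalised `aᵢ` yields `f ∈ X*`; by convexity of the
norm the gain only improves when `f` is enlarged, so `f` can be taken of a prescribed norm `r`,
and all later errors can be fixed in advance as small multiples of `ε r`. Let `uᵢ`, `vᵢ` in the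
unit ball nearly norm `aᵢ + f` and `aᵢ - f`. Alternative octahedrality gives one unit vector `y`
such that, for every `i`, `y` or `-y` is almost aligned with `wᵢ = Tᵢ uᵢ + Tᵢ vᵢ`. Testing
`Tᵢ ± f ⊗ y` on `uᵢ` and `vᵢ` (swapped in the second case) gives
`‖Tᵢ + f ⊗ y‖ + ‖Tᵢ - f ⊗ y‖ ≥ ‖wᵢ ± (f uᵢ - f vᵢ) • y‖ ≳ ‖aᵢ + f‖ + ‖aᵢ - f‖`,
and the rank-one operator `f ⊗ y` lies in `H`.
-/

open scoped BigOperators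

/-- A Banach space `Z` is `δ`-average rough. -/
def IsAverageRough (Z : Type*) [NormedAddCommGroup Z] (δ : ℝ) : Prop :=
  ∀ n : ℕ, 0 < n → ∀ x : Fin n → Z, (∀ i, ‖x i‖ = 1) →
    ∀ ε > (0 : ℝ), ∀ η > (0 : ℝ), ∃ y : Z, 0 < ‖y‖ ∧ ‖y‖ < η ∧
      (δ - ε) * ‖y‖ ≤ (1 / (n : ℝ)) * ∑ i, (‖x i + y‖ + ‖x i - y‖) - 2

/-- A Banach space `Z` is alternatively octahedral. -/
def AlternativelyOctahedral (Z : Type*) [NormedAddCommGroup Z] : Prop :=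
  ∀ (n : ℕ) (x : Fin n → Z), (∀ i, ‖x i‖ = 1) →
    ∀ ε > (0 : ℝ), ∃ y : Z, ‖y‖ = 1 ∧ ∀ i, 2 - ε ≤ max ‖x i + y‖ ‖x i - y‖

open NormedSpace

lemma one_div_mul_sum_sub {n : ℕ} (hn : 0 < n) (α : Fin n → ℝ) (c : ℝ) :
    1 / (n : ℝ) * ∑ i, α i - c = 1 / (n : ℝ) * ∑ i, (α i - c) := by
  rw [Finset.sum_sub_distrib, Finset.sum_const, Finset.card_univ, Fintype.card_fin,
    nsmul_eq_mul]
  field_simp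

lemma one_div_mul_sum_sub_le {n : ℕ} (hn : 0 < n) {α β : Fin n → ℝ} {c : ℝ}
    (h : ∀ i, α i - c ≤ β i) : 1 / (n : ℝ) * ∑ i, α i - c ≤ 1 / (n : ℝ) * ∑ i, β i := by
  rw [one_div_mul_sum_sub hn]
  gcongr with i
  exact h i

section Normed

variable {E : Type*} [NormedAddCommGroup E]

lemma norm_add_add_norm_sub_le (a b f : E) :
    ‖a + f‖ + ‖a - f‖ ≤ ‖b + f‖ + ‖b - f‖ + 2 * ‖a - b‖ := by
  have h₁ : ‖a + f‖ ≤ ‖b + f‖ + ‖a - b‖ := by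
    simpa [add_sub_add_right_eq_sub] using norm_le_norm_add_norm_sub' (a + f) (b + f)
  have h₂ : ‖a - f‖ ≤ ‖b - f‖ + ‖a - b‖ := by
    simpa [sub_sub_sub_cancel_right] using norm_le_norm_add_norm_sub' (a - f) (b - f)
  linarith

variable [NormedSpace ℝ E]

lemma norm_normalize_sub_self_le (x : E) : ‖normalize x - x‖ ≤ |1 - ‖x‖| := by
  have hx : normalize x - x = (1 - ‖x‖) • normalize x := by
    nth_rewrite 2 [← norm_smul_normalize x]
    rw [sub_smul, one_smul]
  have hle : ‖normalize x‖ ≤ 1 := by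
    by_cases h : x = 0
    · simp [h]
    · exact (norm_normalize h).le
  rw [hx, norm_smul, Real.norm_eq_abs]
  exact mul_le_of_le_one_right (abs_nonneg _) hle

lemma norm_normalize_add_add_norm_normalize_sub_le {a : E} (ha : ‖a‖ ≤ 1) (f : E) :
    ‖normalize a + f‖ + ‖normalize a - f‖ ≤ ‖a + f‖ + ‖a - f‖ + 2 * (1 - ‖a‖) := by
  have h := norm_normalize_sub_self_le a
  rw [abs_of_nonneg (sub_nonneg.mpr ha)] at h
  linarith [norm_add_add_norm_sub_le (normalize a) a f]

lemma mul_norm_add_sub_one_le {a : E} (ha : ‖a‖ ≤ 1) (g : E) {l : ℝ} (hl : 1 ≤ l) :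
    l * (‖a + g‖ - 1) ≤ ‖a + l • g‖ - 1 := by
  have h : l • (a + g) = (a + l • g) + (l - 1) • a := by
    rw [smul_add, sub_smul, one_smul]; abel
  have h' := norm_add_le (a + l • g) ((l - 1) • a)
  rw [← h, norm_smul, norm_smul, Real.norm_of_nonneg (by linarith),
    Real.norm_of_nonneg (by linarith)] at h'
  nlinarith

lemma one_sub_mul_norm_add_le_norm_add_smul {w z : E} {C ι : ℝ} (hz : ‖z‖ = 1)
    (hC : C ≤ ‖w‖) (h : 2 - ι ≤ ‖normalize w + z‖) :
    (1 - ι) * ‖w‖ + C ≤ ‖w + C • z‖ := by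
  have hw : w + C • z = ‖w‖ • (normalize w + z) - (‖w‖ - C) • z := by
    rw [smul_add, norm_smul_normalize, sub_smul]; abel
  have h' := norm_sub_norm_le (‖w‖ • (normalize w + z)) ((‖w‖ - C) • z)
  rw [← hw, norm_smul, norm_smul, hz, norm_norm, Real.norm_of_nonneg (by linarith)] at h'
  nlinarith [norm_nonneg w]

end Normed

section Dual

variable {X : Type*} [NormedAddCommGroup X] [NormedSpace ℝ X]

lemma exists_norm_lt_one_lt_apply (a : StrongDual ℝ X) {β : ℝ} (hβ : β < ‖a‖) :
    ∃ u : X, ‖u‖ < 1 ∧ β < a u := by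
  obtain ⟨u, hu, hau⟩ := a.exists_lt_apply_of_lt_opNorm hβ
  rw [Real.norm_eq_abs] at hau
  rcases le_or_gt 0 (a u) with h | h
  · exact ⟨u, hu, by rwa [abs_of_nonneg h] at hau⟩
  · exact ⟨-u, by rwa [norm_neg], by rwa [map_neg, ← abs_of_neg h]⟩

lemma abs_apply_lt_of_norm_add_sub_lt {a f : StrongDual ℝ X} {u : X} {ι : ℝ} (hu : ‖u‖ ≤ 1)
    (hf : 3 * ‖f‖ + ι ≤ ‖a‖) (h : ‖a + f‖ - ι < (a + f) u) : |f u| < a u := by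
  have hfu : |f u| ≤ ‖f‖ := by simpa using f.unit_le_opNorm u hu
  have ha : ‖a‖ ≤ ‖a + f‖ + ‖f‖ := by
    simpa using norm_le_norm_add_norm_sub' a (a + f)
  rw [add_apply] at h
  rw [abs_le] at hfu
  rw [abs_lt]
  constructor <;> linarith [hfu.1, hfu.2]

end Dual

theorem IsAverageRough.exists_norm_eq {Z : Type*} [NormedAddCommGroup Z] [NormedSpace ℝ Z]
    {δ : ℝ} (h : IsAverageRough Z δ) {n : ℕ} (hn : 0 < n) {x : Fin n → Z}
    (hx : ∀ i, ‖x i‖ = 1) {ε r : ℝ} (hε : 0 < ε) (hr : 0 < r) :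
    ∃ y : Z, ‖y‖ = r ∧ (δ - ε) * r ≤ 1 / (n : ℝ) * ∑ i, (‖x i + y‖ + ‖x i - y‖) - 2 := by
  obtain ⟨y, hy₀, hyr, hy⟩ := h n hn x hx ε hε r hr
  set l := r / ‖y‖
  have hl : 1 ≤ l := (one_le_div hy₀).2 hyr.le
  have hscale : ∀ i, l * (‖x i + y‖ + ‖x i - y‖) - (2 * l - 2) ≤
      ‖x i + l • y‖ + ‖x i - l • y‖ := by
    intro i
    have h₁ := mul_norm_add_sub_one_le (hx i).le y hl
    have h₂ := mul_norm_add_sub_one_le (hx i).le (-y) hl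
    rw [smul_neg, ← sub_eq_add_neg, ← sub_eq_add_neg] at h₂
    linarith
  refine ⟨l • y, ?_, ?_⟩
  · rw [norm_smul, Real.norm_of_nonneg (by positivity), div_mul_cancel₀ _ hy₀.ne']
  have hsum := one_div_mul_sum_sub_le hn hscale
  rw [← Finset.mul_sum, mul_left_comm] at hsum
  calc (δ - ε) * r = l * ((δ - ε) * ‖y‖) := by
        simp only [l]; field_simp
    _ ≤ l * (1 / (n : ℝ) * ∑ i, (‖x i + y‖ + ‖x i - y‖) - 2) := by gcongr
    _ ≤ _ := by linarith

section Operator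

variable {X Y : Type*} [NormedAddCommGroup X] [NormedSpace ℝ X]
  [NormedAddCommGroup Y] [NormedSpace ℝ Y]

lemma exists_norm_le_one_lt_norm_comp (T : X →L[ℝ] Y) {β : ℝ} (hβ : β < ‖T‖) :
    ∃ g : StrongDual ℝ Y, ‖g‖ ≤ 1 ∧ β < ‖g ∘L T‖ := by
  obtain ⟨x, hx, hTx⟩ := T.exists_lt_apply_of_lt_opNorm hβ
  obtain ⟨g, hg, hgTx⟩ := exists_dual_vector'' ℝ (T x)
  refine ⟨g, hg, hTx.trans_le ?_⟩
  calc ‖T x‖ = ‖(g ∘L T) x‖ := by simp [hgTx]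
    _ ≤ ‖g ∘L T‖ := (g ∘L T).unit_le_opNorm x hx.le

lemma norm_apply_add_apply_le (P Q : X →L[ℝ] Y) {u v : X} (hu : ‖u‖ ≤ 1) (hv : ‖v‖ ≤ 1) :
    ‖P u + Q v‖ ≤ ‖P‖ + ‖Q‖ :=
  (norm_add_le _ _).trans (add_le_add (P.unit_le_opNorm u hu) (Q.unit_le_opNorm v hv))

lemma finiteDimensional_range_smulRight (f : StrongDual ℝ X) (y : Y) :
    FiniteDimensional ℝ (LinearMap.range (f.smulRight y : X →ₗ[ℝ] Y)) := by
  refine Submodule.finiteDimensional_of_le (S₂ := ℝ ∙ y) ?_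
  rintro _ ⟨u, rfl⟩
  exact Submodule.smul_mem _ (f u) (Submodule.mem_span_singleton_self y)

lemma apply_add_apply_sub_le_norm_add_add_norm_sub {T : X →L[ℝ] Y} {g : StrongDual ℝ Y}
    {f : StrongDual ℝ X} {u v : X} {y : Y} {ι : ℝ} (hT : ‖T‖ ≤ 1) (hg : ‖g‖ ≤ 1)
    (hu : ‖u‖ ≤ 1) (hv : ‖v‖ ≤ 1) (hι : 0 ≤ ι) (hy : ‖y‖ = 1)
    (hC : f u - f v ≤ g (T u + T v))
    (hoct : 2 - ι ≤ max ‖normalize (T u + T v) + y‖ ‖normalize (T u + T v) - y‖) :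
    (g ∘L T + f) u + (g ∘L T - f) v - 2 * ι ≤
      ‖T + f.smulRight y‖ + ‖T - f.smulRight y‖ := by
  set w := T u + T v
  set S := f.smulRight y
  have hgw : g w ≤ ‖w‖ :=
    calc g w ≤ ‖g w‖ := le_abs_self _
      _ ≤ ‖g‖ * ‖w‖ := g.le_opNorm w
      _ ≤ ‖w‖ := mul_le_of_le_one_left (norm_nonneg w) hg
  have hw : ‖w‖ ≤ 2 := by
    linarith [norm_apply_add_apply_le T T hu hv]
  obtain ⟨z, hz, hzw, hzS⟩ : ∃ z : Y, ‖z‖ = 1 ∧ 2 - ι ≤ ‖normalize w + z‖ ∧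
      ‖w + (f u - f v) • z‖ ≤ ‖T + S‖ + ‖T - S‖ := by
    rcases le_max_iff.mp hoct with h | h
    · refine ⟨y, hy, h, ?_⟩
      have he : (T + S) u + (T - S) v = w + (f u - f v) • y := by
        simp only [S, w, add_apply, sub_apply,
          ContinuousLinearMap.smulRight_apply, sub_smul]
        abel
      exact he ▸ norm_apply_add_apply_le _ _ hu hv
    · refine ⟨-y, by rwa [norm_neg], by rwa [← sub_eq_add_neg], ?_⟩
      have he : (T + S) v + (T - S) u = w + (f u - f v) • -y := by
        simp only [S, w, add_apply, sub_apply,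
          ContinuousLinearMap.smulRight_apply, sub_smul, smul_neg]
        abel
      exact he ▸ norm_apply_add_apply_le _ _ hv hu
  have hnorm := one_sub_mul_norm_add_le_norm_add_smul hz (hC.trans hgw) hzw
  have hval : (g ∘L T + f) u + (g ∘L T - f) v = g w + (f u - f v) := by
    simp only [w, add_apply, sub_apply,
      ContinuousLinearMap.comp_apply, map_add]
    ring
  -- `(1 - ι) * ‖w‖ ≥ g w - 2 * ι` because `g w ≤ ‖w‖ ≤ 2`
  nlinarith

theorem AlternativelyOctahedral.exists_norm_add_add_norm_sub_le_smulRight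
    (hY : AlternativelyOctahedral Y) {n : ℕ} (T : Fin n → X →L[ℝ] Y)
    (g : Fin n → StrongDual ℝ Y) (f : StrongDual ℝ X) {ι : ℝ} (hι : 0 < ι)
    (hT : ∀ i, ‖T i‖ ≤ 1) (hg : ∀ i, ‖g i‖ ≤ 1) (hf : ∀ i, 3 * ‖f‖ + ι ≤ ‖g i ∘L T i‖) :
    ∃ y : Y, ‖y‖ = 1 ∧ ∀ i, ‖g i ∘L T i + f‖ + ‖g i ∘L T i - f‖ - 4 * ι ≤
      ‖T i + f.smulRight y‖ + ‖T i - f.smulRight y‖ := by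
  choose u hu hau using fun i ↦ exists_norm_lt_one_lt_apply (g i ∘L T i + f) (sub_lt_self _ hι)
  choose v hv hav using fun i ↦ exists_norm_lt_one_lt_apply (g i ∘L T i - f) (sub_lt_self _ hι)
  have hfu (i) : |f (u i)| < g i (T i (u i)) :=
    abs_apply_lt_of_norm_add_sub_lt (hu i).le (hf i) (hau i)
  have hfv (i) : |f (v i)| < g i (T i (v i)) := by
    have := abs_apply_lt_of_norm_add_sub_lt (a := g i ∘L T i) (f := -f) (hv i).le
      (by rw [norm_neg]; exact hf i) (by rw [← sub_eq_add_neg]; exact hav i)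
    rwa [neg_apply, abs_neg] at this
  have hgw (i) : |f (u i)| + |f (v i)| < g i (T i (u i) + T i (v i)) := by
    rw [map_add]; linarith [hfu i, hfv i]
  have hw (i) : T i (u i) + T i (v i) ≠ 0 := by
    intro h
    have := hgw i
    rw [h, map_zero] at this
    linarith [abs_nonneg (f (u i)), abs_nonneg (f (v i))]
  obtain ⟨y, hy, hoct⟩ := hY n (fun i ↦ normalize (T i (u i) + T i (v i)))
    (fun i ↦ norm_normalize (hw i)) ι hι
  refine ⟨y, hy, fun i ↦ ?_⟩
  have hC : f (u i) - f (v i) ≤ g i (T i (u i) + T i (v i)) := by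
    linarith [hgw i, le_abs_self (f (u i)), neg_abs_le (f (v i))]
  have := apply_add_apply_sub_le_norm_add_add_norm_sub (hT i) (hg i) (hu i).le (hv i).le
    hι.le hy hC (hoct i)
  linarith [hau i, hav i]

end Operator

theorem averageRough_of_dual_averageRough_of_altOctahedral
    (X Y : Type*) [NormedAddCommGroup X] [NormedSpace ℝ X]
    [NormedAddCommGroup Y] [NormedSpace ℝ Y]
    (H : Submodule ℝ (X →L[ℝ] Y))
    (hHfin : ∀ T : X →L[ℝ] Y, FiniteDimensional ℝ (LinearMap.range (T : X →ₗ[ℝ] Y)) → T ∈ H)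
    (δ : ℝ)
    (hX : IsAverageRough (StrongDual ℝ X) δ)
    (hY : AlternativelyOctahedral Y) :
    IsAverageRough H δ := by
  intro n hn T hT ε hε η hη
  obtain ⟨r, hr, hrη, hr₁⟩ : ∃ r : ℝ, 0 < r ∧ r < η ∧ r ≤ 1 / 8 :=
    ⟨min η 1 / 8, by positivity, by linarith [min_le_left η 1], by linarith [min_le_right η 1]⟩
  obtain ⟨ι, hι, hιr, hι₁⟩ : ∃ ι : ℝ, 0 < ι ∧ 12 * ι ≤ ε * r ∧ ι ≤ 1 / 4 :=
    ⟨min (ε * r / 12) (1 / 4), by positivity, by linarith [min_le_left (ε * r / 12) (1 / 4)],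
      min_le_right _ _⟩
  have hT' (i) : ‖(T i : X →L[ℝ] Y)‖ = 1 := hT i
  choose g hg hgT using fun i ↦ exists_norm_le_one_lt_norm_comp (T i : X →L[ℝ] Y)
    (β := 1 - ι) (by rw [hT' i]; linarith)
  set a : Fin n → StrongDual ℝ X := fun i ↦ g i ∘L (T i : X →L[ℝ] Y)
  have ha (i) : ‖a i‖ ≤ 1 :=
    (ContinuousLinearMap.opNorm_comp_le _ _).trans (by rw [hT' i, mul_one]; exact hg i)
  obtain ⟨f, hfr, hf⟩ := hX.exists_norm_eq hn (x := fun i ↦ normalize (a i))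
    (fun i ↦ norm_normalize (norm_pos_iff.mp (by linarith [hgT i]))) (half_pos hε) hr
  obtain ⟨y, hy, hTS⟩ := hY.exists_norm_add_add_norm_sub_le_smulRight (fun i ↦ T i) g f hι
    (fun i ↦ (hT' i).le) hg (fun i ↦ by rw [hfr]; linarith [hgT i])
  refine ⟨⟨f.smulRight y, hHfin _ (finiteDimensional_range_smulRight f y)⟩, ?_, ?_, ?_⟩ <;>
    simp only [Submodule.coe_norm, ContinuousLinearMap.norm_smulRight_apply, hfr, hy, mul_one]
  · exact hr
  · exact hrη
  have hi (i) : ‖normalize (a i) + f‖ + ‖normalize (a i) - f‖ - 6 * ι ≤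
      ‖(T i : X →L[ℝ] Y) + f.smulRight y‖ + ‖(T i : X →L[ℝ] Y) - f.smulRight y‖ := by
    linarith [norm_normalize_add_add_norm_normalize_sub_le (ha i) f, hTS i, hgT i]
  have hsum := one_div_mul_sum_sub_le hn hi
  simp only [Submodule.coe_add, Submodule.coe_sub]
  linarith
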